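/- arXiv:1908.09270 — 2 statements merged into one kernel-verified Lean document; each statement's English description precedes it below -/
import Mathlib

section
/- Let x_1,...,x_n be positive reals and define the max-min problem value V = max over (ρ_1,...,ρ_{n-1}) ∈ [0,1]^{n-1} of min over k ∈ {1,...,n} of x_k·(∏_{j=1}^{k-1} ρ_j)·(1 - ρ_k), where ρ_n := 0. Then V = 1/(∑_{k=1}^{n} 1/x_k), the harmonic-sum value. -/
/-- Max-min SNR value: for positive `x_1,…,x_n`, the max over `ρ ∈ [0,1]^{n-1}`
(with `ρ_n := 0`) of `min_k x_k·(∏_{j<k} ρ_j)·(1-ρ_k)` equals the harmonic-sum value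
`1/(∑_{k=1}^n 1/x_k)`. -/
theorem stmt_14 (n : ℕ) (hn : 1 ≤ n) (hne : (Finset.Icc 1 n).Nonempty)
    (x : ℕ → ℝ) (hx : ∀ k ∈ Finset.Icc 1 n, 0 < x k) :
    IsGreatest {v : ℝ | ∃ ρ : ℕ → ℝ,
        (∀ j ∈ Finset.Icc 1 (n - 1), ρ j ∈ Set.Icc (0 : ℝ) 1) ∧ ρ n = 0 ∧
        v = (Finset.Icc 1 n).inf' hne
          (fun k => x k * (∏ j ∈ Finset.Icc 1 (k - 1), ρ j) * (1 - ρ k))}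
      (1 / ∑ k ∈ Finset.Icc 1 n, 1 / x k) := by
  set S : ℝ := ∑ k ∈ Finset.Icc 1 n, 1 / x k with hSdef
  have hS : 0 < S := Finset.sum_pos (fun k hk => one_div_pos.mpr (hx k hk)) hne
  -- tail sums
  set T : ℕ → ℝ := fun j => ∑ i ∈ Finset.Icc j n, 1 / x i with hTdef
  have hT1 : T 1 = S := rfl
  have hTtop : T (n + 1) = 0 := by
    simp [hTdef, Finset.Icc_eq_empty_of_lt (Nat.lt_succ_self n)]
  have hTstep : ∀ j, 1 ≤ j → j ≤ n → T j = 1 / x j + T (j + 1) := by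
    intro j h1 h2
    simp only [hTdef]
    rw [Finset.Icc_eq_cons_Ioc h2, Finset.sum_cons, ← Finset.Icc_add_one_left_eq_Ioc]
  have hTpos : ∀ j, 1 ≤ j → j ≤ n → 0 < T j := by
    intro j h1 h2
    apply Finset.sum_pos
    · intro i hi
      simp only [Finset.mem_Icc] at hi
      exact one_div_pos.mpr (hx i (Finset.mem_Icc.mpr ⟨le_trans h1 hi.1, hi.2⟩))
    · exact ⟨j, Finset.mem_Icc.mpr ⟨le_refl j, h2⟩⟩
  have hTnonneg : ∀ j, 1 ≤ j → 0 ≤ T j := by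
    intro j h1
    rcases le_or_gt j n with h | h
    · exact (hTpos j h1 h).le
    · simp [hTdef, Finset.Icc_eq_empty_of_lt h]
  constructor
  · -- membership: ρ j = T (j+1) / T j
    refine ⟨fun j => T (j + 1) / T j, ?_, ?_, ?_⟩
    · intro j hj
      simp only [Finset.mem_Icc] at hj
      have hjn : j ≤ n := le_trans hj.2 (Nat.sub_le n 1)
      have h1 := hTpos j hj.1 hjn
      constructor
      · exact div_nonneg (hTnonneg _ (by omega)) h1.le
      · rw [div_le_one h1, hTstep j hj.1 hjn]
        have := hx j (Finset.mem_Icc.mpr ⟨hj.1, hjn⟩)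
        linarith [one_div_pos.mpr this]
    · show T (n + 1) / T n = 0
      rw [hTtop, zero_div]
    · -- each value equals 1/S
      have key : ∀ k ∈ Finset.Icc 1 n,
          x k * (∏ j ∈ Finset.Icc 1 (k - 1), T (j + 1) / T j) * (1 - T (k + 1) / T k)
            = 1 / S := by
        intro k hk
        simp only [Finset.mem_Icc] at hk
        have hprod : ∀ k, 1 ≤ k → k ≤ n →
            (∏ j ∈ Finset.Icc 1 (k - 1), T (j + 1) / T j) = T k / T 1 := by
          intro k hk1
          induction k, hk1 using Nat.le_induction with
          | base => intro _; simp [div_self (ne_of_gt (hTpos 1 le_rfl hn))]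
          | succ k hk ih =>
            intro hkn
            have hkn' : k ≤ n := by omega
            have h1 : Finset.Icc 1 (k + 1 - 1) = Finset.Icc 1 ((k - 1) + 1) := by
              congr 1; omega
            rw [h1, Finset.prod_Icc_succ_top (by omega), ih hkn']
            have hk1 : k - 1 + 1 = k := by omega
            rw [hk1]
            have hTk := hTpos k hk hkn'
            field_simp
        rw [hprod k hk.1 hk.2]
        have hTk := hTpos k hk.1 hk.2
        have hxk := hx k (Finset.mem_Icc.mpr hk)
        have hdiff : T k - T (k + 1) = 1 / x k := by
          rw [hTstep k hk.1 hk.2]; ring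
        have h1 : 1 - T (k + 1) / T k = (1 / x k) / T k := by
          rw [← hdiff, sub_div, div_self hTk.ne']
        rw [h1, hT1]
        field_simp
      apply le_antisymm
      · exact Finset.le_inf' _ _ fun k hk => (key k hk).ge
      · exact (Finset.inf'_le _ (Finset.mem_Icc.mpr ⟨hn, le_rfl⟩)).trans
          (key n (Finset.mem_Icc.mpr ⟨hn, le_rfl⟩)).le
  · -- upper bound
    rintro v ⟨ρ, hρmem, hρn, hv⟩
    have hle : ∀ k ∈ Finset.Icc 1 n,
        v ≤ x k * (∏ j ∈ Finset.Icc 1 (k - 1), ρ j) * (1 - ρ k) := by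
      intro k hk
      rw [hv]
      exact Finset.inf'_le _ hk
    have key : ∀ k, 1 ≤ k → k ≤ n →
        (∏ j ∈ Finset.Icc 1 (k - 1), ρ j) ≤ 1 - v * ∑ j ∈ Finset.Icc 1 (k - 1), 1 / x j := by
      intro k hk1
      induction k, hk1 using Nat.le_induction with
      | base => intro _; simp
      | succ k hk ih =>
        intro hkn
        have hkn' : k ≤ n := by omega
        have ih' := ih hkn'
        have hkmem : k ∈ Finset.Icc 1 n := Finset.mem_Icc.mpr ⟨hk, hkn'⟩
        have hxk := hx k hkmem
        have hvk := hle k hkmem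
        have hk1 : k - 1 + 1 = k := by omega
        have h1 : Finset.Icc 1 (k + 1 - 1) = Finset.Icc 1 ((k - 1) + 1) := by
          congr 1; omega
        rw [h1, Finset.prod_Icc_succ_top (by omega), Finset.sum_Icc_succ_top (by omega), hk1]
        have h2 : v / x k ≤ (∏ j ∈ Finset.Icc 1 (k - 1), ρ j) * (1 - ρ k) := by
          rw [div_le_iff₀ hxk]
          linarith [hvk]
        rw [div_le_iff₀ hxk] at h2
        have hd : v * (1 / x k) * x k = v := by field_simp
        nlinarith [ih', h2, hxk]
    have hfin := key n hn le_rfl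
    have hvn := hle n (Finset.mem_Icc.mpr ⟨hn, le_rfl⟩)
    rw [hρn] at hvn
    have hxn := hx n (Finset.mem_Icc.mpr ⟨hn, le_rfl⟩)
    have hsum : S = (∑ j ∈ Finset.Icc 1 (n - 1), 1 / x j) + 1 / x n := by
      have he : Finset.Icc 1 (n - 1) = (Finset.Icc 1 n).erase n := by
        ext i; simp only [Finset.mem_Icc, Finset.mem_erase]; omega
      rw [hSdef, he, Finset.sum_erase_add _ _ (Finset.mem_Icc.mpr ⟨hn, le_rfl⟩)]
    rw [le_div_iff₀ hS]
    have h4 : v ≤ (1 - v * ∑ j ∈ Finset.Icc 1 (n - 1), 1 / x j) * x n := by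
      nlinarith [hvn, mul_le_mul_of_nonneg_right hfin hxn.le]
    have hinv2 : v * (1 / x n) * x n = v := by field_simp
    rw [hsum]
    nlinarith [h4, hinv2, hxn]
end

section
/- At the optimum of the max-min problem V = max_{ρ ∈ [0,1]^{n-1}} min_k x_k·(∏_{j<k} ρ_j)·(1 - ρ_k) with positive x_k (ρ_n := 0), all hop values are equal: there exists an optimal ρ* at which x_k·(∏_{j<k} ρ_j*)·(1 - ρ_k*) = V for every k = 1,...,n. -/
/-- SNR balancing: at the max-min optimum there is a feasible `ρ⋆` for which every hop
value `x_k·(∏_{j<k} ρ⋆_j)·(1-ρ⋆_k)` equals the optimal value `1/∑_k 1/x_k`. -/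
theorem stmt_15 (n : ℕ) (hn : 1 ≤ n)
    (x : ℕ → ℝ) (hx : ∀ k ∈ Finset.Icc 1 n, 0 < x k) :
    ∃ ρ : ℕ → ℝ,
      (∀ j ∈ Finset.Icc 1 (n - 1), ρ j ∈ Set.Icc (0 : ℝ) 1) ∧ ρ n = 0 ∧
      ∀ k ∈ Finset.Icc 1 n,
        x k * (∏ j ∈ Finset.Icc 1 (k - 1), ρ j) * (1 - ρ k)
          = 1 / ∑ j ∈ Finset.Icc 1 n, 1 / x j := by
  set T : ℕ → ℝ := fun k => ∑ j ∈ Finset.Icc k n, 1 / x j with hT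
  have hTpos : ∀ k, 1 ≤ k → k ≤ n → 0 < T k := by
    intro k h1 h2
    apply Finset.sum_pos
    · intro j hj
      rw [Finset.mem_Icc] at hj
      exact one_div_pos.mpr (hx j (Finset.mem_Icc.mpr ⟨le_trans h1 hj.1, hj.2⟩))
    · exact ⟨k, Finset.mem_Icc.mpr ⟨le_refl k, h2⟩⟩
  have hTnonneg : ∀ k, 1 ≤ k → 0 ≤ T k := by
    intro k h1
    apply Finset.sum_nonneg
    intro j hj
    rw [Finset.mem_Icc] at hj
    exact le_of_lt (one_div_pos.mpr (hx j (Finset.mem_Icc.mpr ⟨le_trans h1 hj.1, hj.2⟩)))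
  have hTrec : ∀ k, 1 ≤ k → k ≤ n → T k = 1 / x k + T (k + 1) := by
    intro k h1 h2
    show (∑ j ∈ Finset.Icc k n, 1 / x j) = _
    rw [Finset.Icc_eq_cons_Ioc h2, Finset.sum_cons, ← Finset.Icc_add_one_left_eq_Ioc]
  have hTtop : T (n + 1) = 0 := by
    show (∑ j ∈ Finset.Icc (n+1) n, 1 / x j) = 0
    rw [Finset.Icc_eq_empty (by omega), Finset.sum_empty]
  refine ⟨fun j => T (j + 1) / T j, ?_, ?_, ?_⟩
  · intro j hj
    rw [Finset.mem_Icc] at hj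
    have h1 : 1 ≤ j := hj.1
    have h2 : j + 1 ≤ n := by omega
    constructor
    · exact div_nonneg (hTnonneg _ (by omega)) (hTnonneg _ h1)
    · rw [div_le_one (hTpos j h1 (by omega))]
      rw [hTrec j h1 (by omega)]
      have := one_div_pos.mpr (hx j (Finset.mem_Icc.mpr ⟨h1, by omega⟩))
      linarith
  · show T (n + 1) / T n = 0
    rw [hTtop, zero_div]
  · intro k hk
    rw [Finset.mem_Icc] at hk
    have hprod : ∀ k, 1 ≤ k → k ≤ n →
        (∏ j ∈ Finset.Icc 1 (k - 1), T (j + 1) / T j) = T k / T 1 := by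
      intro k
      induction k with
      | zero => omega
      | succ m ih =>
        intro _ h2
        rcases Nat.eq_or_lt_of_le (Nat.one_le_iff_ne_zero.mpr (by omega) : 1 ≤ m + 1) with h | h
        · rw [← h]
          simp [div_self (ne_of_gt (hTpos 1 le_rfl hn))]
        · have hm1 : 1 ≤ m := by omega
          have hmn : m ≤ n := by omega
          have : m + 1 - 1 = m := by omega
          rw [this, show Finset.Icc 1 m = Finset.Icc 1 (m - 1 + 1) by rw [Nat.sub_add_cancel hm1],
            Finset.prod_Icc_succ_top (by omega), Nat.sub_add_cancel hm1, ih hm1 hmn]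
          have hTm : T m ≠ 0 := ne_of_gt (hTpos m hm1 hmn)
          rw [div_mul_div_comm, mul_comm (T 1) (T m), mul_div_mul_left _ _ hTm]
    rw [hprod k hk.1 hk.2]
    have hTk : T k ≠ 0 := ne_of_gt (hTpos k hk.1 hk.2)
    have hT1 : T 1 ≠ 0 := ne_of_gt (hTpos 1 le_rfl hn)
    have hxk : x k ≠ 0 := ne_of_gt (hx k (Finset.mem_Icc.mpr hk))
    have hrec := hTrec k hk.1 hk.2
    show x k * (T k / T 1) * (1 - T (k + 1) / T k) = 1 / T 1
    have h1 : 1 - T (k + 1) / T k = (1 / x k) / T k := by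
      rw [eq_div_iff hTk, sub_mul, div_mul_cancel₀ _ hTk]
      linarith
    rw [h1]
    field_simp
end
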